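/- For every r with a² + r² > 0, the gradient invariant I₅ of the Kerr–(anti-)de Sitter black hole restricted to the symmetry axis θ = 0 satisfies I₅(r, 0) = −1354752 m⁴ (a⁶ − 5a⁴r² + 3a²r⁴ − r⁶/7)² r² (Λr⁴ + (Λa² − 3)r² + 6mr − 3a²)/(a² + r²)¹⁵; in particular I₅(r, 0) = 0 whenever Λr⁴ + (Λa² − 3)r² + 6mr − 3a² = 0, i.e. at the stationary horizon radii. -/

import Mathlib

noncomputable section

namespace KerrAdS

/-- `ρ² = r² + a² cos²θ` in Boyer–Lindquist coordinates. -/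
def rho2 (a r θ : ℝ) : ℝ := r ^ 2 + a ^ 2 * Real.cos θ ^ 2

/-- The complex combination `I₁ + i I₂ = 48 m² (r − i a cos θ)⁶ / ρ¹²`
(the orientation convention `I₁ + iI₂ = 48 Ψ₂²` with `Ψ₂ = −m/(r + i a cos θ)³`). -/
def Ic (a m r θ : ℝ) : ℂ :=
  48 * (m : ℂ) ^ 2 * ((r : ℂ) - Complex.I * ((a * Real.cos θ : ℝ) : ℂ)) ^ 6 /
    ((rho2 a r θ : ℝ) : ℂ) ^ 6

/-- The Weyl invariant `I₁ = C_{αβγδ} C^{αβγδ}` of the Kerr–(anti-)de Sitter black hole. -/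
def I1 (a m r θ : ℝ) : ℝ := (Ic a m r θ).re

/-- The Chern–Pontryagin invariant `I₂ = C*_{αβγδ} C^{αβγδ}`. -/
def I2 (a m r θ : ℝ) : ℝ := (Ic a m r θ).im

/-- `Δ_r = (1 − Λr²/3)(r² + a²) − 2mr`. -/
def Δr (a m Λ r : ℝ) : ℝ := (1 - Λ * r ^ 2 / 3) * (r ^ 2 + a ^ 2) - 2 * m * r

/-- `Δ_θ = 1 + (a²Λ/3) cos²θ`. -/
def Δθ (a Λ θ : ℝ) : ℝ := 1 + a ^ 2 * Λ / 3 * Real.cos θ ^ 2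

/-- The gradient invariant `I₅ = ∇_μ I₁ ∇^μ I₁
  = (Δ_r/ρ²)(∂_r I₁)² + (Δ_θ/ρ²)(∂_θ I₁)²`. -/
def I5 (a m Λ r θ : ℝ) : ℝ :=
  Δr a m Λ r / rho2 a r θ * (deriv (fun r' => I1 a m r' θ) r) ^ 2 +
    Δθ a Λ θ / rho2 a r θ * (deriv (fun θ' => I1 a m r θ') θ) ^ 2

/-- The gradient invariant `I₆ = ∇_μ I₂ ∇^μ I₂
  = (Δ_r/ρ²)(∂_r I₂)² + (Δ_θ/ρ²)(∂_θ I₂)²`. -/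
def I6 (a m Λ r θ : ℝ) : ℝ :=
  Δr a m Λ r / rho2 a r θ * (deriv (fun r' => I2 a m r' θ) r) ^ 2 +
    Δθ a Λ θ / rho2 a r θ * (deriv (fun θ' => I2 a m r θ') θ) ^ 2

/-- The gradient invariant `I₇ = ∇_μ I₁ ∇^μ I₂
  = (Δ_r/ρ²)(∂_r I₁)(∂_r I₂) + (Δ_θ/ρ²)(∂_θ I₁)(∂_θ I₂)`. -/
def I7 (a m Λ r θ : ℝ) : ℝ :=
  Δr a m Λ r / rho2 a r θ *
      (deriv (fun r' => I1 a m r' θ) r) * (deriv (fun r' => I2 a m r' θ) r) +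
    Δθ a Λ θ / rho2 a r θ *
      (deriv (fun θ' => I1 a m r θ') θ) * (deriv (fun θ' => I2 a m r θ') θ)

/-- The ergosurface polynomial
`E = Λa⁴c⁴ − Λa⁴c² − Λa²r² − Λr⁴ + 3a²c² − 6mr + 3r²`, `c = cos θ`. -/
def E (a m Λ r θ : ℝ) : ℝ :=
  Λ * a ^ 4 * Real.cos θ ^ 4 - Λ * a ^ 4 * Real.cos θ ^ 2 - Λ * a ^ 2 * r ^ 2 - Λ * r ^ 4 +
    3 * a ^ 2 * Real.cos θ ^ 2 - 6 * m * r + 3 * r ^ 2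

/-- The differential Weyl invariant `I₃ = ∇_μ C_{αβγδ} ∇^μ C^{αβγδ}`
(explicit closed form). -/
def I3 (a m Λ r θ : ℝ) : ℝ :=
  240 * m ^ 2 / rho2 a r θ ^ 9 *
    (a ^ 4 * Real.cos θ ^ 4 - 4 * a ^ 3 * Real.cos θ ^ 3 * r
      - 6 * a ^ 2 * Real.cos θ ^ 2 * r ^ 2 + 4 * a * Real.cos θ * r ^ 3 + r ^ 4) *
    (a ^ 4 * Real.cos θ ^ 4 + 4 * a ^ 3 * Real.cos θ ^ 3 * r
      - 6 * a ^ 2 * Real.cos θ ^ 2 * r ^ 2 - 4 * a * Real.cos θ * r ^ 3 + r ^ 4) *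
    E a m Λ r θ

/-- The mixed differential Weyl invariant `I₄ = ∇_μ C_{αβγδ} ∇^μ C*^{αβγδ}`
(explicit closed form). -/
def I4 (a m Λ r θ : ℝ) : ℝ :=
  1920 * a * Real.cos θ * r * m ^ 2 / rho2 a r θ ^ 9 * E a m Λ r θ *
    (a ^ 2 * Real.cos θ ^ 2 - 2 * a * Real.cos θ * r - r ^ 2) *
    (a ^ 2 * Real.cos θ ^ 2 + 2 * a * Real.cos θ * r - r ^ 2) *
    (a ^ 2 * Real.cos θ ^ 2 - r ^ 2)

end KerrAdS

/-!
On the axis `cos θ = 1`, and `I₁ + iI₂ = 48m²/(r + ia)⁶` there, so `∂_r I₁` is the real part of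
the complex derivative `-288m²/(r + ia)⁷ = -288m²(r − ia)⁷/(r² + a²)⁷`. The angular term of `I₅`
drops out because `I₁` depends on `θ` only through `cos θ`, hence is even in `θ`.
-/

theorem Function.Even.deriv_zero {F : Type*} [NormedAddCommGroup F] [NormedSpace ℝ F]
    {f : ℝ → F} (hf : f.Even) : deriv f 0 = 0 := by
  have h := deriv_comp_neg f 0
  rw [show (fun x => f (-x)) = f from funext hf, neg_zero] at h
  have h2 : (2 : ℝ) • deriv f 0 = 0 := by
    rw [two_smul]; nth_rw 1 [h]; exact neg_add_cancel _
  exact (smul_eq_zero.mp h2).resolve_left two_ne_zero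

theorem Complex.re_add_mul_I_pow_seven (x y : ℝ) :
    ((x + y * Complex.I) ^ 7 : ℂ).re =
      x ^ 7 - 21 * x ^ 5 * y ^ 2 + 35 * x ^ 3 * y ^ 4 - 7 * x * y ^ 6 := by
  simp only [pow_succ, pow_zero, one_mul, Complex.mul_re, Complex.mul_im, Complex.add_re,
    Complex.add_im, Complex.ofReal_re, Complex.ofReal_im, Complex.I_re, Complex.I_im]
  ring

namespace KerrAdS

open Complex ComplexConjugate

theorem Ic_eq (a m r θ : ℝ) :
    Ic a m r θ = 48 * (m : ℂ) ^ 2 / ((r : ℂ) + (a * Real.cos θ : ℝ) * I) ^ 6 := by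
  set w : ℂ := (r : ℂ) + (a * Real.cos θ : ℝ) * I
  have hconj : (r : ℂ) - I * ((a * Real.cos θ : ℝ) : ℂ) = conj w := by
    simp only [w, map_add, map_mul, conj_ofReal, conj_I]; ring
  have hnormSq : rho2 a r θ = normSq w := by
    rw [normSq_add_mul_I, rho2]; ring
  rw [Ic, hconj, hnormSq, mul_div_assoc, ← div_pow, div_eq_mul_inv (conj w), ← ofReal_inv,
    ← inv_def, inv_pow, div_eq_mul_inv]

theorem I1_even (a m r : ℝ) : (fun θ => I1 a m r θ).Even := fun θ => by
  simp only [I1, Ic, rho2, Real.cos_neg]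

theorem hasDerivAt_I1_axis (a m r : ℝ) (h : 0 < a ^ 2 + r ^ 2) :
    HasDerivAt (fun r' => I1 a m r' 0)
      (2016 * m ^ 2 * r * (a ^ 6 - 5 * a ^ 4 * r ^ 2 + 3 * a ^ 2 * r ^ 4 - r ^ 6 / 7)
        / (a ^ 2 + r ^ 2) ^ 7) r := by
  have hne : r ^ 2 + a ^ 2 ≠ 0 := by linarith
  have hw : (r : ℂ) + a * I ≠ 0 := by
    rw [← normSq_pos, normSq_add_mul_I]; linarith
  have hI1 : (fun r' => I1 a m r' 0) =
      fun x : ℝ => (48 * (m : ℂ) ^ 2 / ((x : ℂ) + a * I) ^ 6).re := by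
    funext x
    rw [I1, Ic_eq, Real.cos_zero, mul_one]
  have hc : HasDerivAt (fun z : ℂ => 48 * (m : ℂ) ^ 2 / (z + a * I) ^ 6)
      (-288 * (m : ℂ) ^ 2 * ((r : ℂ) + a * I)⁻¹ ^ 7) r := by
    have := ((hasDerivAt_id' (r : ℂ)).add_const ((a : ℂ) * I)).fun_pow 6
    refine ((hasDerivAt_const _ _).div this (pow_ne_zero 6 hw)).congr_deriv ?_
    field_simp
    ring
  have hconj : ((r : ℂ) + a * I)⁻¹ = (r + (-a : ℝ) * I) * (((r ^ 2 + a ^ 2) : ℝ) : ℂ)⁻¹ := by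
    rw [inv_def, normSq_add_mul_I]
    simp only [map_add, map_mul, conj_ofReal, conj_I]
    push_cast; ring
  have hscalar : -288 * (m : ℂ) ^ 2 * ((r : ℂ) + a * I)⁻¹ ^ 7
      = ((-288 * m ^ 2 * (r ^ 2 + a ^ 2)⁻¹ ^ 7 : ℝ) : ℂ) * (r + (-a : ℝ) * I) ^ 7 := by
    rw [hconj]; push_cast; ring
  rw [hI1]
  convert hc.real_of_complex using 1
  rw [hscalar, re_ofReal_mul, re_add_mul_I_pow_seven]
  field_simp
  ring

/-- On the symmetry axis `θ = 0` the gradient invariant `I₅` of the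
Kerr–(anti-)de Sitter black hole takes the stated closed form; in particular it vanishes
at the stationary horizon radii, i.e. whenever `Λr⁴ + (Λa² − 3)r² + 6mr − 3a² = 0`. -/
theorem I5_axis (a m Λ : ℝ) :
    ∀ r : ℝ, 0 < a ^ 2 + r ^ 2 →
      I5 a m Λ r 0 =
        -(1354752 * m ^ 4 * (a ^ 6 - 5 * a ^ 4 * r ^ 2 + 3 * a ^ 2 * r ^ 4 - r ^ 6 / 7) ^ 2 *
            r ^ 2 * (Λ * r ^ 4 + (Λ * a ^ 2 - 3) * r ^ 2 + 6 * m * r - 3 * a ^ 2)) /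
          (a ^ 2 + r ^ 2) ^ 15 ∧
      (Λ * r ^ 4 + (Λ * a ^ 2 - 3) * r ^ 2 + 6 * m * r - 3 * a ^ 2 = 0 →
        I5 a m Λ r 0 = 0) := by
  intro r hr
  have hne : r ^ 2 + a ^ 2 ≠ 0 := by linarith
  have hI5 : I5 a m Λ r 0 =
      -(1354752 * m ^ 4 * (a ^ 6 - 5 * a ^ 4 * r ^ 2 + 3 * a ^ 2 * r ^ 4 - r ^ 6 / 7) ^ 2 *
          r ^ 2 * (Λ * r ^ 4 + (Λ * a ^ 2 - 3) * r ^ 2 + 6 * m * r - 3 * a ^ 2)) /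
        (a ^ 2 + r ^ 2) ^ 15 := by
    rw [I5, (hasDerivAt_I1_axis a m r hr).deriv, (I1_even a m r).deriv_zero, rho2,
      Real.cos_zero, one_pow, mul_one, Δr]
    field_simp
    ring
  refine ⟨hI5, fun hhorizon => ?_⟩
  rw [hI5, hhorizon, mul_zero, neg_zero, zero_div]

end KerrAdS
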